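/- Fix α ≥ 1 and let 2α < S ≤ 2√(α²+1). The Bell-diagonal two-qubit state with λ₁ = 1/2 + (1/2)√(S²/4 − α²), λ₂ = 1/2 − (1/2)√(S²/4 − α²), λ₃ = λ₄ = 0 has concurrence exactly √(S²/4 − α²), and with observables A₀ = σ_z, A₁ = σ_x, B₀ = cosθ σ_z + sinθ σ_x, B₁ = cosθ σ_z − sinθ σ_x where tanθ = (1/α)√(S²/4 − α²), its α-CHSH value equals S. -/

import Mathlib

open Matrix Kronecker Complex Real ComplexOrder

/-- 2×2 complex matrices (one qubit). -/
abbrev M2 := Matrix (Fin 2) (Fin 2) ℂ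
/-- 4×4 complex matrices (two qubits), indexed by `Fin 2 × Fin 2`. -/
abbrev M4 := Matrix (Fin 2 × Fin 2) (Fin 2 × Fin 2) ℂ

noncomputable def σx : M2 := !![0, 1; 1, 0]
noncomputable def σy : M2 := !![0, -Complex.I; Complex.I, 0]
noncomputable def σz : M2 := !![1, 0; 0, -1]

/-- A ±1-valued qubit observable: Hermitian involution. -/
def IsObs (A : M2) : Prop := A.IsHermitian ∧ A * A = 1

/-- A two-qubit density operator. -/
def IsState (ρ : M4) : Prop := ρ.PosSemidef ∧ ρ.trace = 1

/-- The α-CHSH Bell operator. -/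
noncomputable def Sop (α : ℝ) (A0 A1 B0 B1 : M2) : M4 :=
  (α : ℂ) • (A0 ⊗ₖ B0 + A0 ⊗ₖ B1) + A1 ⊗ₖ B0 - A1 ⊗ₖ B1

/-- The α-CHSH Bell value of a state with given observables. -/
noncomputable def BellValue (ρ : M4) (α : ℝ) (A0 A1 B0 B1 : M2) : ℂ :=
  (ρ * Sop α A0 A1 B0 B1).trace

/-- Computational basis vectors of ℂ²⊗ℂ². -/
def ket (i j : Fin 2) : Fin 2 × Fin 2 → ℂ := fun p => if p = (i, j) then 1 else 0

noncomputable def PhiP : Fin 2 × Fin 2 → ℂ := ((Real.sqrt 2 : ℂ))⁻¹ • (ket 0 0 + ket 1 1)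
noncomputable def PhiM : Fin 2 × Fin 2 → ℂ := ((Real.sqrt 2 : ℂ))⁻¹ • (ket 0 0 - ket 1 1)
noncomputable def PsiP : Fin 2 × Fin 2 → ℂ := ((Real.sqrt 2 : ℂ))⁻¹ • (ket 0 1 + ket 1 0)
noncomputable def PsiM : Fin 2 × Fin 2 → ℂ := ((Real.sqrt 2 : ℂ))⁻¹ • (ket 0 1 - ket 1 0)

/-- Rank-one projector |v⟩⟨v|. -/
noncomputable def proj (v : Fin 2 × Fin 2 → ℂ) : M4 := Matrix.vecMulVec v (star v)

/-- Bell-diagonal two-qubit state. -/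
noncomputable def BellDiag (l1 l2 l3 l4 : ℝ) : M4 :=
  (l1 : ℂ) • proj PhiP + (l2 : ℂ) • proj PhiM + (l3 : ℂ) • proj PsiP + (l4 : ℂ) • proj PsiM

noncomputable def YY : M4 := σy ⊗ₖ σy

attribute [local instance] Classical.propDecidable

/-- The positive semidefinite square root of a positive semidefinite matrix (the definition
`Matrix.PosSemidef.sqrt` of the older Mathlib, removed since). -/
noncomputable def Matrix.PosSemidef.sqrt {n : Type*} [Fintype n] [DecidableEq n] {A : Matrix n n ℂ}
    (hA : A.PosSemidef) : Matrix n n ℂ :=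
  (hA.1.eigenvectorUnitary : Matrix n n ℂ) * diagonal ((↑) ∘ (√·) ∘ hA.1.eigenvalues) *
    (star hA.1.eigenvectorUnitary : Matrix n n ℂ)

/-- Concurrence of a two-qubit state: `max {0, μ₁ − μ₂ − μ₃ − μ₄}` where the `μᵢ` are the
decreasingly ordered square roots of the eigenvalues of `√ρ (σy⊗σy) ρ* (σy⊗σy) √ρ`
(for the decreasingly ordered values, `μ₁ − μ₂ − μ₃ − μ₄ = 2 max μᵢ − ∑ μᵢ`). -/
noncomputable def concurrence (ρ : M4) : ℝ :=
  if hρ : ρ.PosSemidef then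
    if hX : (hρ.sqrt * (YY * ρ.map (starRingEnd ℂ) * YY) * hρ.sqrt).IsHermitian then
      let μ : Fin 2 × Fin 2 → ℝ := fun p => Real.sqrt (hX.eigenvalues p)
      max 0 (2 * (Finset.univ.sup' Finset.univ_nonempty μ) - ∑ p, μ p)
    else 0
  else 0

/-!
Write a Bell-diagonal state as `ρ = U diag(λ) Uᴴ`, where the real unitary `U` has the Bell states
as columns. The Bell states are real eigenvectors of `σy ⊗ σy`, so the spin flip
`(σy ⊗ σy) ρ̄ (σy ⊗ σy)` is `ρ` itself and Wootters' matrix `√ρ ρ̃ √ρ` is `ρ² = U diag(λ²) Uᴴ`.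
Its eigenvalues are the `λᵢ²`, so the `μᵢ` are the `λᵢ` and the concurrence is
`max 0 (2 max λᵢ - ∑ λᵢ) = c`. In the α-CHSH value only the `zz` and `xx` correlations of `ρ`
survive, giving `2α cos θ + 2c sin θ`, which is `S` because `cos θ = 2α/S` and `sin θ = 2c/S`.
-/

section General

variable {n : Type*} [Fintype n] [DecidableEq n]

theorem Matrix.PosSemidef.sqrt_mul_self {A : Matrix n n ℂ} (hA : A.PosSemidef) :
    hA.sqrt * hA.sqrt = A := by
  have hsqrt : hA.sqrt = Unitary.conjStarAlgAut ℂ _ hA.1.eigenvectorUnitary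
      (diagonal ((↑) ∘ (√·) ∘ hA.1.eigenvalues)) := by
    rw [Unitary.conjStarAlgAut_apply]; rfl
  conv_rhs => rw [hA.1.spectral_theorem]
  rw [hsqrt, ← map_mul, diagonal_mul_diagonal]
  congr 2
  funext i
  simp [← Complex.ofReal_mul, Real.mul_self_sqrt (hA.eigenvalues_nonneg i)]

theorem Matrix.PosSemidef.sqrt_mul_mul_sqrt {A : Matrix n n ℂ} (hA : A.PosSemidef) :
    hA.sqrt * A * hA.sqrt = A * A :=
  calc hA.sqrt * A * hA.sqrt = hA.sqrt * (hA.sqrt * hA.sqrt) * hA.sqrt := by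
        rw [hA.sqrt_mul_self]
    _ = (hA.sqrt * hA.sqrt) * (hA.sqrt * hA.sqrt) := by simp only [mul_assoc]
    _ = A * A := by rw [hA.sqrt_mul_self]

theorem Matrix.sum_smul_vecMulVec_eq_mul_diagonal_mul_conjTranspose (v : n → n → ℂ)
    (d : n → ℂ) :
    ∑ i, d i • vecMulVec (v i) (star (v i)) = (of v)ᵀ * diagonal d * (of v)ᵀᴴ := by
  ext p q
  rw [mul_apply]
  simp [Matrix.sum_apply, vecMulVec_apply, mul_diagonal, mul_assoc, mul_left_comm]

open Polynomial in
theorem Matrix.IsHermitian.map_eigenvalues_eq_of_unitary_conj {U : Matrix n n ℂ}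
    (hU : Uᴴ * U = 1) (d : n → ℝ) (hA : (U * diagonal (fun i => (d i : ℂ)) * Uᴴ).IsHermitian) :
    Finset.univ.val.map hA.eigenvalues = Finset.univ.val.map d := by
  have hchar : (U * diagonal (fun i => (d i : ℂ)) * Uᴴ).charpoly
      = (diagonal (fun i => (d i : ℂ))).charpoly := by
    rw [charpoly_mul_comm, ← mul_assoc, hU, one_mul]
  have hroots := hA.roots_charpoly_eq_eigenvalues
  rw [hchar, charpoly_diagonal,
    roots_prod _ _ (by simp [Finset.prod_ne_zero_iff, X_sub_C_ne_zero])] at hroots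
  refine Multiset.map_injective Complex.ofReal_injective ?_
  simpa [Multiset.map_map] using hroots.symm

end General

section MultisetTransfer

variable {ι α β : Type*} [Fintype ι] {e d : ι → α}

theorem Finset.sum_comp_eq_of_map_univ_val_eq [AddCommMonoid β]
    (h : univ.val.map e = univ.val.map d) (f : α → β) : ∑ i, f (e i) = ∑ i, f (d i) := by
  simpa [Multiset.map_map] using congrArg (fun s => (s.map f).sum) h

theorem Finset.sup'_comp_eq_of_map_univ_val_eq [DecidableEq α] [SemilatticeSup β]
    (h : univ.val.map e = univ.val.map d) (f : α → β) (hι : (univ : Finset ι).Nonempty) :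
    univ.sup' hι (fun i => f (e i)) = univ.sup' hι (fun i => f (d i)) := by
  have himage : univ.image e = univ.image d := by
    ext x
    simpa using congrArg (x ∈ ·) h
  simp_rw [← Function.comp_apply (f := f), sup'_comp_eq_image, himage]

end MultisetTransfer

theorem concurrence_eq_of_sqrt_mul_flip_mul_sqrt_eq {ρ : M4} (hρ : ρ.PosSemidef) {U : M4}
    (hU : Uᴴ * U = 1) {d : Fin 2 × Fin 2 → ℝ} (hd : 0 ≤ d)
    (h : hρ.sqrt * (YY * ρ.map (starRingEnd ℂ) * YY) * hρ.sqrt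
      = U * diagonal (fun i => ((d i ^ 2 : ℝ) : ℂ)) * Uᴴ) :
    concurrence ρ = max 0 (2 * Finset.univ.sup' Finset.univ_nonempty d - ∑ i, d i) := by
  have hX : (U * diagonal (fun i => ((d i ^ 2 : ℝ) : ℂ)) * Uᴴ).IsHermitian :=
    ((PosSemidef.diagonal fun i => by positivity).mul_mul_conjTranspose_same U).1
  have heig := hX.map_eigenvalues_eq_of_unitary_conj hU (fun i => d i ^ 2)
  have hsqrt : ∀ i, √(d i ^ 2) = d i := fun i => Real.sqrt_sq (hd i)
  rw [concurrence, dif_pos hρ, h, dif_pos hX]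
  simp only
  rw [Finset.sum_comp_eq_of_map_univ_val_eq heig, Finset.sup'_comp_eq_of_map_univ_val_eq heig]
  simp only [hsqrt]

noncomputable def bellVec (i : Fin 2 × Fin 2) : Fin 2 × Fin 2 → ℂ :=
  ![![PhiP, PhiM], ![PsiP, PsiM]] i.1 i.2

def bellWeights (l1 l2 l3 l4 : ℝ) (i : Fin 2 × Fin 2) : ℝ := ![![l1, l2], ![l3, l4]] i.1 i.2

noncomputable def bellBasis : M4 := (of bellVec)ᵀ

def bellYYSign (i : Fin 2 × Fin 2) : ℂ := ![![-1, 1], ![1, -1]] i.1 i.2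

theorem ofReal_sqrt_two_inv_mul_self : ((√2 : ℝ) : ℂ)⁻¹ * ((√2 : ℝ) : ℂ)⁻¹ = 1 / 2 := by
  rw [← mul_inv, ← Complex.ofReal_mul, Real.mul_self_sqrt zero_le_two]
  norm_num

theorem bellBasis_conjTranspose_mul_self : bellBasisᴴ * bellBasis = 1 := by
  ext ⟨i, j⟩ ⟨k, l⟩
  fin_cases i <;> fin_cases j <;> fin_cases k <;> fin_cases l <;>
    simp [bellBasis, bellVec, mul_apply, Fintype.sum_prod_type, PhiP, PhiM, PsiP, PsiM, ket,
      ofReal_sqrt_two_inv_mul_self] <;> ring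

theorem bellBasis_map_conj : bellBasis.map (starRingEnd ℂ) = bellBasis := by
  ext ⟨i, j⟩ ⟨k, l⟩
  fin_cases i <;> fin_cases j <;> fin_cases k <;> fin_cases l <;>
    simp [bellBasis, bellVec, PhiP, PhiM, PsiP, PsiM, ket]

theorem YY_mul_bellBasis : YY * bellBasis = bellBasis * diagonal bellYYSign := by
  ext ⟨i, j⟩ ⟨k, l⟩
  fin_cases i <;> fin_cases j <;> fin_cases k <;> fin_cases l <;>
    simp [YY, σy, bellBasis, bellVec, bellYYSign, mul_apply, Fintype.sum_prod_type,
      PhiP, PhiM, PsiP, PsiM, ket]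

theorem YY_mul_map_conj_mul_YY_of_bellBasis (d : Fin 2 × Fin 2 → ℝ) :
    YY * (bellBasis * diagonal (fun i => (d i : ℂ)) * bellBasisᴴ).map (starRingEnd ℂ) * YY
      = bellBasis * diagonal (fun i => (d i : ℂ)) * bellBasisᴴ := by
  have hYY : YYᴴ = YY := by
    ext ⟨i, j⟩ ⟨k, l⟩
    fin_cases i <;> fin_cases j <;> fin_cases k <;> fin_cases l <;> simp [YY, σy]
  have hsign : diagonal bellYYSign * diagonal (fun i => (d i : ℂ)) * diagonal bellYYSign
      = diagonal (fun i => (d i : ℂ)) := by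
    rw [diagonal_mul_diagonal, diagonal_mul_diagonal]
    congr 1; funext ⟨i, j⟩
    fin_cases i <;> fin_cases j <;> simp [bellYYSign]
  have hsignH : (diagonal bellYYSign)ᴴ = diagonal bellYYSign := by
    rw [diagonal_conjTranspose]; congr 1; funext ⟨i, j⟩
    fin_cases i <;> fin_cases j <;> simp [bellYYSign]
  have hflip : bellBasisᴴ * YY = diagonal bellYYSign * bellBasisᴴ := by
    rw [← hYY, ← conjTranspose_mul, YY_mul_bellBasis, conjTranspose_mul, hsignH]
  rw [Matrix.map_mul, Matrix.map_mul, bellBasis_map_conj, diagonal_map (map_zero _),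
    conjTranspose_map (starRingEnd ℂ) fun _ => rfl, bellBasis_map_conj]
  simp only [Complex.conj_ofReal]
  calc YY * (bellBasis * diagonal (fun i => (d i : ℂ)) * bellBasisᴴ) * YY
      = bellBasis * (diagonal bellYYSign * diagonal (fun i => (d i : ℂ)) * diagonal bellYYSign)
        * bellBasisᴴ := by
        simp only [← mul_assoc, YY_mul_bellBasis]
        simp only [mul_assoc, hflip]
    _ = _ := by rw [hsign]

theorem bellDiag_eq_conj (l1 l2 l3 l4 : ℝ) : BellDiag l1 l2 l3 l4
    = bellBasis * diagonal (fun i => (bellWeights l1 l2 l3 l4 i : ℂ)) * bellBasisᴴ := by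
  have hsum : BellDiag l1 l2 l3 l4
      = ∑ i, (bellWeights l1 l2 l3 l4 i : ℂ) • proj (bellVec i) := by
    simp [BellDiag, Fintype.sum_prod_type, bellWeights, bellVec, add_assoc]
  rw [hsum]
  exact sum_smul_vecMulVec_eq_mul_diagonal_mul_conjTranspose bellVec _

theorem sum_bellWeights (l1 l2 l3 l4 : ℝ) :
    ∑ i, bellWeights l1 l2 l3 l4 i = l1 + l2 + l3 + l4 := by
  simp [Fintype.sum_prod_type, bellWeights, add_assoc]

theorem sup'_bellWeights (l1 l2 l3 l4 : ℝ) :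
    Finset.univ.sup' Finset.univ_nonempty (bellWeights l1 l2 l3 l4)
      = max (max l1 l2) (max l3 l4) := by
  refine le_antisymm (Finset.sup'_le _ _ ?_) ?_
  · rintro ⟨i, j⟩ -
    fin_cases i <;> fin_cases j <;> simp [bellWeights]
  · have h := fun i j => Finset.le_sup' (bellWeights l1 l2 l3 l4) (Finset.mem_univ (i, j))
    exact max_le (max_le (h 0 0) (h 0 1)) (max_le (h 1 0) (h 1 1))

theorem concurrence_bellDiag {l1 l2 l3 l4 : ℝ} (h1 : 0 ≤ l1) (h2 : 0 ≤ l2) (h3 : 0 ≤ l3)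
    (h4 : 0 ≤ l4) : concurrence (BellDiag l1 l2 l3 l4)
      = max 0 (2 * max (max l1 l2) (max l3 l4) - (l1 + l2 + l3 + l4)) := by
  set w := bellWeights l1 l2 l3 l4
  set ρ := BellDiag l1 l2 l3 l4
  have hw : 0 ≤ w := by
    rintro ⟨i, j⟩
    fin_cases i <;> fin_cases j <;> assumption
  have hρ : ρ = bellBasis * diagonal (fun i => (w i : ℂ)) * bellBasisᴴ := bellDiag_eq_conj ..
  have hpsd : ρ.PosSemidef := hρ ▸
    (PosSemidef.diagonal fun i => Complex.zero_le_real.2 (hw i)).mul_mul_conjTranspose_same _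
  have hflip : hpsd.sqrt * (YY * ρ.map (starRingEnd ℂ) * YY) * hpsd.sqrt
      = bellBasis * diagonal (fun i => ((w i ^ 2 : ℝ) : ℂ)) * bellBasisᴴ := by
    have hρflip : YY * ρ.map (starRingEnd ℂ) * YY = ρ := by
      rw [hρ]; exact YY_mul_map_conj_mul_YY_of_bellBasis w
    rw [hρflip, hpsd.sqrt_mul_mul_sqrt, hρ]
    calc bellBasis * diagonal (fun i => (w i : ℂ)) * bellBasisᴴ
          * (bellBasis * diagonal (fun i => (w i : ℂ)) * bellBasisᴴ)
        = bellBasis * diagonal (fun i => (w i : ℂ)) * (bellBasisᴴ * bellBasis)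
          * diagonal (fun i => (w i : ℂ)) * bellBasisᴴ := by simp only [mul_assoc]
      _ = _ := by
        rw [bellBasis_conjTranspose_mul_self, mul_one, mul_assoc bellBasis,
          diagonal_mul_diagonal]
        push_cast [sq]
        rfl
  rw [concurrence_eq_of_sqrt_mul_flip_mul_sqrt_eq hpsd bellBasis_conjTranspose_mul_self hw hflip,
    sup'_bellWeights, sum_bellWeights]

theorem bellValue_bellDiag (l1 l2 l3 l4 α c s : ℝ) :
    BellValue (BellDiag l1 l2 l3 l4) α σz σx ((c : ℂ) • σz + (s : ℂ) • σx)
      ((c : ℂ) • σz - (s : ℂ) • σx)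
      = ((2 * α * c * (l1 + l2 - l3 - l4) + 2 * s * (l1 - l2 + l3 - l4) : ℝ) : ℂ) := by
  simp [BellValue, Sop, BellDiag, proj, trace, mul_apply, Fintype.sum_prod_type,
    vecMulVec_apply, kroneckerMap_apply, σz, σx, PhiP, PhiM, PsiP, PsiM, ket]
  rw [ofReal_sqrt_two_inv_mul_self]
  ring

/-- The Bell-diagonal state with `λ₁ = 1/2 + √(S²/4−α²)/2`, `λ₂ = 1/2 − √(S²/4−α²)/2`,
`λ₃ = λ₄ = 0` has concurrence exactly `√(S²/4−α²)`, and with the observables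
`A₀ = σz`, `A₁ = σx`, `B₀ = cosθ σz + sinθ σx`, `B₁ = cosθ σz − sinθ σx`,
`tanθ = (1/α)√(S²/4−α²)`, its α-CHSH value equals `S`. -/
theorem concurrence_bound_saturated (α S : ℝ) (hα : 1 ≤ α)
    (hS1 : 2 * α < S) (hS2 : S ≤ 2 * Real.sqrt (α ^ 2 + 1)) :
    let c := Real.sqrt (S ^ 2 / 4 - α ^ 2)
    let ρ := BellDiag (1 / 2 + c / 2) (1 / 2 - c / 2) 0 0
    let θ := Real.arctan ((1 / α) * c)
    let B0 : M2 := (Real.cos θ : ℂ) • σz + (Real.sin θ : ℂ) • σx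
    let B1 : M2 := (Real.cos θ : ℂ) • σz - (Real.sin θ : ℂ) • σx
    concurrence ρ = c ∧ BellValue ρ α σz σx B0 B1 = (S : ℂ) := by
  intro c ρ θ B0 B1
  have hα0 : 0 < α := by linarith
  have hS0 : 0 < S := by linarith
  have hc2 : c ^ 2 = S ^ 2 / 4 - α ^ 2 := Real.sq_sqrt (by nlinarith)
  have hc0 : 0 ≤ c := Real.sqrt_nonneg _
  have hc1 : c ≤ 1 := by
    nlinarith [Real.sq_sqrt (by positivity : (0 : ℝ) ≤ α ^ 2 + 1), Real.sqrt_nonneg (α ^ 2 + 1)]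
  constructor
  · rw [concurrence_bellDiag (by linarith) (by linarith) le_rfl le_rfl, max_self,
      max_eq_left (by linarith : 1 / 2 - c / 2 ≤ 1 / 2 + c / 2),
      max_eq_left (by linarith : (0 : ℝ) ≤ 1 / 2 + c / 2)]
    ring_nf
    exact max_eq_right hc0
  · have hnorm : √(1 + ((1 / α) * c) ^ 2) = S / (2 * α) := by
      rw [show 1 + ((1 / α) * c) ^ 2 = (S / (2 * α)) ^ 2 by field_simp; linear_combination 4 * hc2]
      exact Real.sqrt_sq (by positivity)
    have hcos : Real.cos θ = 2 * α / S := by rw [Real.cos_arctan, hnorm, one_div_div]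
    have hsin : Real.sin θ = 2 * c / S := by rw [Real.sin_arctan, hnorm]; field_simp
    rw [bellValue_bellDiag, hcos, hsin]
    norm_cast
    field_simp
    linear_combination 4 * hc2
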